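/- If J is an invertible affine game (there exists K with J + K = 0), then for all affine games G, H: G ≥ H if and only if G + J ≥ H + J. -/

import Mathlib

inductive AGame : Type
  | inf : AGame
  | binf : AGame
  | node : List AGame → List AGame → AGame

namespace AGame

/-- The affine games: option sets are nonempty (hereditarily). -/
inductive Valid : AGame → Prop
  | inf : Valid .inf
  | binf : Valid .binf
  | node : ∀ {L R : List AGame}, L ≠ [] → R ≠ [] →
      (∀ g ∈ L, Valid g) → (∀ g ∈ R, Valid g) → Valid (.node L R)

/-- Total version of the disjunctive sum (value on the undefined cases `∞ + ∞̄` is junk). -/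
def add' : AGame → AGame → AGame
  | .inf, _ => .inf
  | _, .inf => .inf
  | .binf, _ => .binf
  | _, .binf => .binf
  | .node L R, .node L' R' =>
      .node ((L.attach.map fun x => add' x.1 (.node L' R')) ++
             (L'.attach.map fun y => add' (.node L R) y.1))
            ((R.attach.map fun x => add' x.1 (.node L' R')) ++
             (R'.attach.map fun y => add' (.node L R) y.1))
termination_by G H => sizeOf G + sizeOf H
decreasing_by
  all_goals
    simp_wf
    first
      | (have := List.sizeOf_lt_of_mem x.2; simp_all; omega)
      | (have := List.sizeOf_lt_of_mem y.2; simp_all; omega)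

/-- The disjunctive sum, undefined (`none`) exactly when adding `∞` to `∞̄`. -/
def add : AGame → AGame → Option AGame
  | .inf, .binf => none
  | .binf, .inf => none
  | G, H => some (add' G H)

mutual
/-- `o^L(G) = L` : Left, playing first, wins `G`. -/
def lf : AGame → Bool
  | .inf => true
  | .binf => false
  | .node L _ => L.attach.any fun x => ls x.1
termination_by G => sizeOf G
decreasing_by
  simp_wf; have := List.sizeOf_lt_of_mem x.2; simp_all; omega
/-- `o^R(G) = L` : Left, playing second, wins `G`. -/
def ls : AGame → Bool
  | .inf => true
  | .binf => false
  | .node _ R => R.attach.all fun x => lf x.1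
termination_by G => sizeOf G
decreasing_by
  simp_wf; have := List.sizeOf_lt_of_mem x.2; simp_all; omega
end

/-- The combined outcome `(o^L(G), o^R(G))`, encoded as a pair of booleans
(`true` = Left wins). `(true,true)` is 𝓛, `(true,false)` is 𝓝, `(false,true)` is 𝓟,
`(false,false)` is 𝓡. -/
def outcome (G : AGame) : Bool × Bool := (lf G, ls G)

/-- The partial order of outcomes (componentwise, 𝓛 maximal, 𝓡 minimal, 𝓝 ∥ 𝓟). -/
def OutLE (a b : Bool × Bool) : Prop :=
  (a.1 = true → b.1 = true) ∧ (a.2 = true → b.2 = true)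

/-- `G ≥ H` : replacing `H` by `G` never hurts Left in any disjunctive sum. -/
def GE (G H : AGame) : Prop :=
  ∀ X : AGame, Valid X → X ≠ .inf → X ≠ .binf →
    OutLE (outcome (add' H X)) (outcome (add' G X))

/-- Game equivalence. -/
def Equiv (G H : AGame) : Prop :=
  ∀ X : AGame, Valid X → X ≠ .inf → X ≠ .binf →
    outcome (add' G X) = outcome (add' H X)

/-- The zero game `{∞̄ | ∞}`. -/
def zero : AGame := .node [.binf] [.inf]

/-- The conjugate (players switch roles). -/
def neg : AGame → AGame
  | .inf => .binf
  | .binf => .inf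
  | .node L R =>
      .node (R.attach.map fun x => neg x.1) (L.attach.map fun x => neg x.1)
termination_by G => sizeOf G
decreasing_by
  all_goals
    simp_wf
    (have := List.sizeOf_lt_of_mem x.2; simp_all; omega)


/-- Left option set (empty list for the terminating games). -/
def leftOptions : AGame → List AGame
  | .node L _ => L
  | _ => []

/-- Right option set (empty list for the terminating games). -/
def rightOptions : AGame → List AGame
  | .node _ R => R
  | _ => []

/-- A check: a game having `∞` as a Left option or `∞̄` as a Right option. -/
def IsCheck : AGame → Prop
  | .node L R => .inf ∈ L ∨ .binf ∈ R
  | _ => False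

/-- `Follower H G` : `H` is a follower of `G` (i.e. `G` itself, an option of `G`,
an option of an option, and so on). -/
inductive Follower : AGame → AGame → Prop
  | refl (G : AGame) : Follower G G
  | left {H K : AGame} {L R : List AGame} : K ∈ L → Follower H K → Follower H (.node L R)
  | right {H K : AGame} {L R : List AGame} : K ∈ R → Follower H K → Follower H (.node L R)

/-- A Conway form: distinct from `∞` and `∞̄`, with no checks among its followers. -/
def ConwayForm (G : AGame) : Prop :=
  G ≠ .inf ∧ G ≠ .binf ∧ ∀ H, Follower H G → ¬ IsCheck H

/-- A Conway game: a game equivalent to some Conway form. -/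
def ConwayGame (G : AGame) : Prop :=
  ∃ G', Valid G' ∧ ConwayForm G' ∧ Equiv G G'

/-- `J` is invertible: `J + K = 0` (in the sense of game equivalence) for some affine `K`. -/
def Invertible (J : AGame) : Prop :=
  ∃ K, Valid K ∧ ∃ S, add J K = some S ∧ Equiv S zero

/-- Number forms: the images of the surreal-number Conway forms under the embedding
that replaces an empty option set by `{∞̄}` on the Left and by `{∞}` on the Right.
Every genuine Left option is strictly less than every genuine Right option, and
all genuine options are again number forms. -/
inductive NumForm : AGame → Prop
  | mk {L R : List AGame}
      (hL0 : L ≠ []) (hR0 : R ≠ [])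
      (hLb : .binf ∈ L → L = [.binf]) (hRi : .inf ∈ R → R = [.inf])
      (hLnum : ∀ x ∈ L, x ≠ .binf → NumForm x)
      (hRnum : ∀ y ∈ R, y ≠ .inf → NumForm y)
      (hlt : ∀ x ∈ L, ∀ y ∈ R, x ≠ .binf → y ≠ .inf → GE y x ∧ ¬ GE x y) :
      NumForm (.node L R)

/-- A number: an affine game equal to (the image of) a Conway number form. -/
def IsNumber (G : AGame) : Prop := ∃ n, Valid n ∧ NumForm n ∧ Equiv G n

/-- The pathetic tiny `⧾∞ = {0 | {0 | ∞̄}}`. -/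
def tinyInf : AGame := .node [zero] [.node [zero] [.binf]]

/-- The pathetic miny `⧿∞ = {{∞ | 0} | 0}`. -/
def minyInf : AGame := .node [.node [.inf] [zero]] [zero]

end AGame

/-!
Adding `J` preserves `≥` because `add'` is associative on the nose, so `(G + J) + X = G + (J + X)`
and `J + X` is again a legitimate (affine, non-terminal) test game. For the converse add the
inverse `K`: this gives `G + S ≥ H + S` with `S = J + K` equivalent to `0`. Although `add'` is
only commutative up to outcome, that suffices to move `S` next to the test game, where it can be
replaced by `0`, which is neutral for outcomes.
-/

namespace AGame

theorem _root_.List.any_congr_of_mem {α : Type*} {l : List α} {f g : α → Bool}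
    (h : ∀ x ∈ l, f x = g x) : l.any f = l.any g := by
  induction l with
  | nil => rfl
  | cons a t ih => simp_all

theorem _root_.List.all_congr_of_mem {α : Type*} {l : List α} {f g : α → Bool}
    (h : ∀ x ∈ l, f x = g x) : l.all f = l.all g := by
  induction l with
  | nil => rfl
  | cons a t ih => simp_all

@[simp] theorem inf_add' (b : AGame) : add' .inf b = .inf := by
  cases b <;> simp [add']

@[simp] theorem add'_inf (a : AGame) : add' a .inf = .inf := by
  cases a <;> simp [add']

theorem binf_add' {b : AGame} (hb : b ≠ .inf) : add' .binf b = .binf := by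
  cases b <;> simp [add'] at hb ⊢

theorem add'_binf {a : AGame} (ha : a ≠ .inf) : add' a .binf = .binf := by
  cases a <;> simp [add'] at ha ⊢

theorem node_add'_node (L R L' R' : List AGame) :
    add' (.node L R) (.node L' R') =
      .node (L.map (add' · (.node L' R')) ++ L'.map (add' (.node L R) ·))
        (R.map (add' · (.node L' R')) ++ R'.map (add' (.node L R) ·)) := by
  rw [add']
  simp

@[simp] theorem lf_inf : lf .inf = true := by simp [lf]
@[simp] theorem lf_binf : lf .binf = false := by simp [lf]
@[simp] theorem ls_inf : ls .inf = true := by simp [ls]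
@[simp] theorem ls_binf : ls .binf = false := by simp [ls]

theorem lf_node (L R : List AGame) : lf (.node L R) = L.any ls := by
  simp [lf]

theorem ls_node (L R : List AGame) : ls (.node L R) = R.all lf := by
  simp [ls]

theorem add'_assoc (a b c : AGame) : add' (add' a b) c = add' a (add' b c) := by
  cases a <;> cases b <;> cases c
  case node.node.node La Ra Lb Rb Lc Rc =>
    have hab := node_add'_node La Ra Lb Rb
    have hbc := node_add'_node Lb Rb Lc Rc
    rw [hab, hbc, node_add'_node, node_add'_node, ← hab, ← hbc]
    simp only [List.map_append, List.map_map, List.append_assoc, Function.comp_def]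
    refine congrArg₂ node ?_ ?_ <;>
      exact congrArg₂ (· ++ ·) (List.map_congr_left fun t ht => add'_assoc _ _ _)
        (congrArg₂ (· ++ ·) (List.map_congr_left fun t ht => add'_assoc _ _ _)
          (List.map_congr_left fun t ht => add'_assoc _ _ _))
  all_goals simp [binf_add', add'_binf, node_add'_node]
termination_by sizeOf a + sizeOf b + sizeOf c
decreasing_by
  all_goals
    simp_wf
    (have := List.sizeOf_lt_of_mem ht; simp_all; omega)

theorem outcome_add'_comm (a b : AGame) : outcome (add' a b) = outcome (add' b a) := by
  cases a <;> cases b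
  case node.node L R L' R' =>
    simp only [outcome, node_add'_node, lf_node, ls_node, List.any_append, List.all_append,
      List.any_map, List.all_map, Function.comp_def, Bool.or_comm (L.any _),
      Bool.and_comm (R.all _)]
    congr 2
    · exact List.any_congr_of_mem fun t ht => congrArg Prod.snd (outcome_add'_comm _ t)
    · exact List.any_congr_of_mem fun t ht => congrArg Prod.snd (outcome_add'_comm t _)
    · exact List.all_congr_of_mem fun t ht => congrArg Prod.fst (outcome_add'_comm _ t)
    · exact List.all_congr_of_mem fun t ht => congrArg Prod.fst (outcome_add'_comm t _)
  all_goals simp [binf_add', add'_binf]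
termination_by sizeOf a + sizeOf b
decreasing_by
  all_goals
    simp_wf
    (have := List.sizeOf_lt_of_mem ht; simp_all; omega)

theorem outcome_zero_add' (W : AGame) : outcome (add' zero W) = outcome W := by
  cases W
  case node L R =>
    rw [zero, node_add'_node, ← zero.eq_def]
    simp only [outcome, lf_node, ls_node, List.map_cons, List.map_nil, List.cons_append,
      List.nil_append, List.any_cons, List.all_cons, binf_add' (nofun : node L R ≠ inf),
      inf_add', ls_binf, lf_inf, Bool.false_or, Bool.true_and, List.any_map, List.all_map,
      Function.comp_def]
    congr 1
    · exact List.any_congr_of_mem fun t ht => congrArg Prod.snd (outcome_zero_add' t)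
    · exact List.all_congr_of_mem fun t ht => congrArg Prod.fst (outcome_zero_add' t)
  all_goals simp [zero, add'_binf]
termination_by sizeOf W
decreasing_by
  all_goals
    simp_wf
    (have := List.sizeOf_lt_of_mem ht; simp_all; omega)

theorem valid_zero : Valid zero :=
  .node (by simp) (by simp) (by simp [Valid.binf]) (by simp [Valid.inf])

theorem valid_add' {a b : AGame} (ha : Valid a) (hb : Valid b) : Valid (add' a b) := by
  cases a <;> cases b
  case node.node L R L' R' =>
    obtain _ | _ | ⟨hL, hR, hLv, hRv⟩ := id ha
    obtain _ | _ | ⟨hL', hR', hLv', hRv'⟩ := id hb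
    rw [node_add'_node]
    refine .node (by simp [hL]) (by simp [hR]) ?_ ?_ <;>
      simp only [List.mem_append, List.mem_map] <;>
      rintro _ (⟨t, ht, rfl⟩ | ⟨t, ht, rfl⟩)
    exacts [valid_add' (hLv t ht) hb, valid_add' ha (hLv' t ht),
      valid_add' (hRv t ht) hb, valid_add' ha (hRv' t ht)]
  all_goals simp [binf_add', add'_binf, Valid.inf, Valid.binf]
termination_by sizeOf a + sizeOf b
decreasing_by
  all_goals
    simp_wf
    (have := List.sizeOf_lt_of_mem ht; simp_all; omega)

theorem add'_ne_inf_and_ne_binf_iff {a b : AGame} :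
    (add' a b ≠ .inf ∧ add' a b ≠ .binf) ↔
      (a ≠ .inf ∧ a ≠ .binf) ∧ (b ≠ .inf ∧ b ≠ .binf) := by
  cases a <;> cases b <;> simp [binf_add', add'_binf, node_add'_node]

theorem add'_eq_of_add_eq_some {a b S : AGame} (h : add a b = some S) : add' a b = S := by
  cases a <;> cases b <;> simp only [add, reduceCtorEq, Option.some.injEq] at h <;> exact h

theorem ne_inf_and_ne_binf_of_equiv_zero {S : AGame} (h : Equiv S zero) :
    S ≠ .inf ∧ S ≠ .binf := by
  have h0 := h zero valid_zero (by simp [zero]) (by simp [zero])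
  rw [outcome_zero_add'] at h0
  cases S <;> simp_all [outcome, zero, lf_node, ls_node, binf_add']

theorem outcome_add'_add'_of_equiv_zero {S G X : AGame} (hS : Equiv S zero) (hG : Valid G)
    (hX : Valid X) (hXi : X ≠ .inf) (hXb : X ≠ .binf) :
    outcome (add' (add' G S) X) = outcome (add' G X) := by
  obtain ⟨hSi, -⟩ := ne_inf_and_ne_binf_of_equiv_zero hS
  cases G
  case inf => simp
  case binf => rw [binf_add' hSi]
  case node L R =>
    obtain ⟨hXGi, hXGb⟩ := add'_ne_inf_and_ne_binf_iff.2
      ⟨⟨hXi, hXb⟩, (nofun : node L R ≠ .inf), (nofun : node L R ≠ .binf)⟩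
    calc outcome (add' (add' (node L R) S) X) = outcome (add' S (add' X (node L R))) := by
          rw [add'_assoc, outcome_add'_comm, add'_assoc]
      _ = outcome (add' zero (add' X (node L R))) := hS _ (valid_add' hX hG) hXGi hXGb
      _ = outcome (add' (node L R) X) := by rw [outcome_zero_add', outcome_add'_comm]

theorem GE.add'_right {G H J : AGame} (h : GE G H) (hJ : Valid J) (hJi : J ≠ .inf)
    (hJb : J ≠ .binf) : GE (add' G J) (add' H J) := by
  intro X hX hXi hXb
  obtain ⟨hJXi, hJXb⟩ := add'_ne_inf_and_ne_binf_iff.2 ⟨⟨hJi, hJb⟩, hXi, hXb⟩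
  rw [add'_assoc, add'_assoc]
  exact h _ (valid_add' hJ hX) hJXi hJXb

theorem GE.of_add'_right_of_equiv_zero {G H S : AGame} (h : GE (add' G S) (add' H S))
    (hS : Equiv S zero) (hG : Valid G) (hH : Valid H) : GE G H := by
  intro X hX hXi hXb
  rw [← outcome_add'_add'_of_equiv_zero hS hG hX hXi hXb,
    ← outcome_add'_add'_of_equiv_zero hS hH hX hXi hXb]
  exact h X hX hXi hXb

/-- If `J` is invertible then `G ≥ H ↔ G + J ≥ H + J`. -/
theorem ge_add_invertible_iff (G H J : AGame) (hG : Valid G) (hH : Valid H)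
    (hJ : Valid J) (hinv : Invertible J) :
    GE G H ↔ GE (add' G J) (add' H J) := by
  obtain ⟨K, hK, S, hJK, hS⟩ := hinv
  have hJKS : add' J K = S := add'_eq_of_add_eq_some hJK
  obtain ⟨⟨hJi, hJb⟩, hKi, hKb⟩ :=
    add'_ne_inf_and_ne_binf_iff.1 (hJKS ▸ ne_inf_and_ne_binf_of_equiv_zero hS)
  refine ⟨fun h => h.add'_right hJ hJi hJb, fun h => ?_⟩
  have hK' := h.add'_right hK hKi hKb
  rw [add'_assoc, add'_assoc, hJKS] at hK'
  exact hK'.of_add'_right_of_equiv_zero hS hG hH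

end AGame
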